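/- For every k ≥ 3, a graph G is k-chromatic and double-edge-critical if and only if G is the complete graph K_k. -/

import Mathlib

/-!
Vertex-criticality forces minimum degree at least `k - 1 ≥ 2`. If `x, y` were distinct and
non-adjacent, pick neighbours `a` of `x` and `c ≠ a` of `y`; the edges `xa, yc` are disjoint,
so deleting them leaves a `(k - 2)`-colourable graph, and giving the independent set `{x, y}` a
fresh colour `(k - 1)`-colours `G`, which is absurd. Hence `G` is complete, on `k` vertices.
Conversely, in `K_n` with disjoint edges `ab, cd` deleted, `b` can take the colour of `a` and
`d` that of `c`, so `n - 2` colours suffice.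
-/

open SimpleGraph

/-- A graph is vertex-critical if deleting any vertex decreases the chromatic number. -/
def VertexCritical {V : Type} (G : SimpleGraph V) : Prop :=
  ∀ v : V, (G.induce ({v}ᶜ : Set V)).chromaticNumber < G.chromaticNumber

/-- A vertex-critical graph is double-edge-critical if deleting any two non-incident edges
(edges sharing no endpoint) decreases the chromatic number by at least two. -/
def DoubleEdgeCritical {V : Type} (G : SimpleGraph V) : Prop :=
  VertexCritical G ∧
  ∀ a b c d : V, G.Adj a b → G.Adj c d → a ≠ c → a ≠ d → b ≠ c → b ≠ d →
    (G.deleteEdges {s(a, b), s(c, d)}).chromaticNumber + 2 ≤ G.chromaticNumber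

namespace SimpleGraph

variable {V : Type*} {G : SimpleGraph V}

lemma colorable_sub_of_chromaticNumber_add_le {k m : ℕ} (h : G.chromaticNumber + m ≤ k) :
    G.Colorable (k - m) := by
  obtain ⟨n, hn⟩ := ENat.ne_top_iff_exists.mp <|
    ne_top_of_le_ne_top (ENat.natCast_ne_top k) (le_self_add.trans h)
  rw [← chromaticNumber_le_iff_colorable, ← hn]
  rw [← hn] at h
  norm_cast at h ⊢
  omega

lemma not_colorable_of_lt_chromaticNumber {n : ℕ} (h : n < G.chromaticNumber) :
    ¬ G.Colorable n :=
  fun hc => (hc.chromaticNumber_le.trans_lt h).false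

lemma Colorable.of_induce_compl_singleton [Fintype V] [DecidableRel G.Adj] {v : V} {n : ℕ}
    (h : (G.induce {v}ᶜ).Colorable n) (hv : G.degree v < n) : G.Colorable n := by
  classical
  obtain ⟨C⟩ := h
  -- The colour `f c v = c` is irrelevant when picking the free colour, as `v` is not its own
  -- neighbour.
  let f (c : Fin n) (u : V) : Fin n := if hu : u = v then c else C ⟨u, hu⟩
  obtain ⟨c, -, hc⟩ :
      ∃ c ∈ Finset.univ, c ∉ (G.neighborFinset v).image (f ⟨0, by omega⟩) := by
    refine Finset.exists_mem_notMem_of_card_lt_card ?_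
    calc _ ≤ G.degree v := Finset.card_image_le
      _ < _ := by simpa using hv
  refine ⟨Coloring.mk (f c) fun {u w} huw => ?_⟩
  have hc_nbr : ∀ w, G.Adj v w → f c w ≠ c := fun w hw hwc =>
    hc (Finset.mem_image.mpr ⟨w, by simpa using hw, by simp_all [f, hw.ne']⟩)
  by_cases hu : u = v <;> by_cases hw : w = v
  · exact absurd huw (by simp [hu, hw])
  · subst hu; exact fun h => hc_nbr w huw (by simp_all [f])
  · subst hw; exact fun h => hc_nbr u huw.symm (by simp_all [f])
  · simpa [f, hu, hw] using C.valid (show (G.induce {v}ᶜ).Adj ⟨u, hu⟩ ⟨w, hw⟩ from huw)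

lemma chromaticNumber_add_le_of_colorable {k m : ℕ} (h : G.Colorable (k - m)) (hmk : m ≤ k) :
    G.chromaticNumber + m ≤ k :=
  calc G.chromaticNumber + m ≤ (k - m : ℕ) + m := add_le_add_left h.chromaticNumber_le _
    _ = k := by norm_cast; omega

lemma Colorable.succ_of_deleteEdges {s : Set V} {S : Set (Sym2 V)} {n : ℕ}
    (hs : G.IsIndepSet s) (hS : ∀ e ∈ S, ∃ v ∈ s, v ∈ e)
    (h : (G.deleteEdges S).Colorable n) : G.Colorable (n + 1) := by
  classical
  obtain ⟨C⟩ := h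
  let D : G.Coloring (Option (Fin n)) :=
    Coloring.mk (fun u => if u ∈ s then none else some (C u)) fun {u w} huw => by
      by_cases hu : u ∈ s <;> by_cases hw : w ∈ s <;> simp only [hu, hw, if_true, if_false]
      · exact absurd huw (hs hu hw (G.ne_of_adj huw))
      · simp
      · simp
      · refine Option.some_injective _ |>.ne <| C.valid <|
          (deleteEdges_adj ..).mpr ⟨huw, fun he => ?_⟩
        obtain ⟨x, hx, hxe⟩ := hS _ he
        rcases Sym2.mem_iff.mp hxe with rfl | rfl <;> contradiction
  simpa using D.colorable

lemma top_deleteEdges_pair_colorable [Fintype V] {a b c d : V} (hab : a ≠ b) (hcd : c ≠ d)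
    (hac : a ≠ c) (had : a ≠ d) (hbc : b ≠ c) (hbd : b ≠ d) :
    ((⊤ : SimpleGraph V).deleteEdges {s(a, b), s(c, d)}).Colorable (Fintype.card V - 2) := by
  classical
  let f (u : V) : {x // x ∉ ({b, d} : Finset V)} :=
    if hb : u = b then ⟨a, by simp [hab, had]⟩
    else if hd : u = d then ⟨c, by simp [hbc.symm, hcd]⟩
    else ⟨u, by simp [hb, hd]⟩
  let C : ((⊤ : SimpleGraph V).deleteEdges {s(a, b), s(c, d)}).Coloring _ :=
    Coloring.mk f fun {u w} huw => by
      simp only [deleteEdges_adj, top_adj, Set.mem_insert_iff, Set.mem_singleton_iff,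
        Sym2.eq_iff] at huw
      unfold f
      split_ifs <;> simp only [ne_eq, Subtype.mk.injEq] <;> grind
  have hC := C.colorable
  rwa [Fintype.card_subtype_compl, Fintype.card_coe, Finset.card_pair hbd] at hC

end SimpleGraph

section Critical

variable {V : Type} {G : SimpleGraph V}

lemma VertexCritical.pred_le_degree [Fintype V] [DecidableRel G.Adj] (hG : VertexCritical G)
    {k : ℕ} (hk : G.chromaticNumber = k) (v : V) : k - 1 ≤ G.degree v := by
  by_contra! hv
  have hcol : (G.induce {v}ᶜ).Colorable (k - 1) :=
    colorable_sub_of_chromaticNumber_add_le (Order.add_one_le_of_lt (hk ▸ hG v))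
  exact not_colorable_of_lt_chromaticNumber (by rw [hk]; norm_cast; omega)
    (hcol.of_induce_compl_singleton hv)

lemma DoubleEdgeCritical.adj [Fintype V] (hG : DoubleEdgeCritical G) {k : ℕ}
    (hk : G.chromaticNumber = k) (h3k : 3 ≤ k) {x y : V} (hxy : x ≠ y) : G.Adj x y := by
  classical
  by_contra hnxy
  have hdeg (v : V) : 1 < G.degree v := by have := hG.1.pred_le_degree hk v; omega
  obtain ⟨a, hxa⟩ := Finset.card_pos.mp (Nat.zero_lt_of_lt (hdeg x))
  obtain ⟨c, hyc, hca⟩ := Finset.exists_mem_ne (hdeg y) a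
  rw [mem_neighborFinset] at hxa hyc
  have hdel := hG.2 x a y c hxa hyc hxy (fun h => hnxy (h ▸ hyc.symm))
    (fun h => hnxy (h ▸ hxa)) hca.symm
  have hcol : G.Colorable (k - 2 + 1) := by
    refine Colorable.succ_of_deleteEdges (s := {x, y}) ?_ ?_
      (colorable_sub_of_chromaticNumber_add_le (hk ▸ hdel))
    · rintro u (rfl | rfl) w (rfl | rfl) huw <;> simp_all [adj_comm]
    · simp
  exact not_colorable_of_lt_chromaticNumber (by rw [hk]; norm_cast; omega) hcol

lemma DoubleEdgeCritical.eq_top [Fintype V] (hG : DoubleEdgeCritical G) {k : ℕ}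
    (hk : G.chromaticNumber = k) (h3k : 3 ≤ k) : G = ⊤ :=
  eq_top_iff.mpr fun _ _ hxy => hG.adj hk h3k hxy

lemma vertexCritical_top [Fintype V] : VertexCritical (⊤ : SimpleGraph V) := by
  classical
  intro v
  have := Fintype.card_pos_iff.mpr ⟨v⟩
  rw [induce_top, chromaticNumber_top, chromaticNumber_top, Fintype.card_compl_set,
    Set.card_singleton]
  norm_cast
  omega

lemma doubleEdgeCritical_top [Fintype V] : DoubleEdgeCritical (⊤ : SimpleGraph V) := by
  refine ⟨vertexCritical_top, fun a b c d hab hcd hac had hbc hbd => ?_⟩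
  classical
  rw [chromaticNumber_top]
  refine chromaticNumber_add_le_of_colorable
    (top_deleteEdges_pair_colorable hab.ne hcd.ne hac had hbc hbd) ?_
  simpa [Finset.card_pair hab.ne] using Finset.card_le_univ {a, b}

end Critical

/-- For every `k ≥ 3`, a graph is `k`-chromatic and double-edge-critical if and only if it
is the complete graph `K_k`. -/
theorem stmt19 {V : Type} [Fintype V] (G : SimpleGraph V) (k : ℕ) (hk : 3 ≤ k) :
    (G.chromaticNumber = k ∧ DoubleEdgeCritical G) ↔
    (G = ⊤ ∧ Fintype.card V = k) := by
  constructor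
  · rintro ⟨hχ, hG⟩
    obtain rfl := hG.eq_top hχ hk
    exact ⟨rfl, by exact_mod_cast chromaticNumber_top.symm.trans hχ⟩
  · rintro ⟨rfl, rfl⟩
    exact ⟨chromaticNumber_top, doubleEdgeCritical_top⟩
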